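/- arXiv:0811.4191 — 2 statements merged into one kernel-verified Lean document; each statement's English description precedes it below -/
import Mathlib

section
/- For any fixed SNR > 0 and any ε ∈ (0, 1/2), with initial rate R_init = M·C_ε^M(SNR), the expected number of H-ARQ rounds is asymptotically full: lim_{M→∞} E[X(M·C_ε^M(SNR), SNR)] / M = 1. -/
/-!
By the strong law of large numbers the normalized accumulated mutual information
`(1/n) ∑_{i<n} log₂(1 + SNR·Hᵢ)` converges in probability to its mean `c > 0`, so the
`ε`-quantiles `C_ε^M(SNR)` converge to `c` as well. Hence for `β < 1`, with probability tending
to one, the information gathered in the first `⌊βM⌋` rounds is about `βMc < M·C_ε^M(SNR)`, so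
`X ≥ ⌊βM⌋`, and Markov's inequality gives `liminf E[X]/M ≥ β`; on the other side `X ≤ M`.
-/

open MeasureTheory ProbabilityTheory Real Filter Topology

/-- Number of IR H-ARQ rounds: `X(R, SNR) = min(M, min{m ≥ 1 : Σ_{i=1}^m log₂(1+SNR·Hᵢ) > R})`
(realized as the infimum of `{M} ∪ {m ≥ 1 : accumulated mutual information exceeds R}`). -/
noncomputable def numRounds {Ω : Type*} (H : ℕ → Ω → ℝ) (M : ℕ) (snr R : ℝ) (ω : Ω) : ℕ :=
  sInf ({M} ∪ {m | 1 ≤ m ∧ R < ∑ i ∈ Finset.range m, Real.logb 2 (1 + snr * H i ω)})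

section HittingTime

variable {Ω ι β : Type*}

theorem measurable_hittingBtwn [MeasurableSpace Ω] [ConditionallyCompleteLinearOrder ι]
    [WellFoundedLT ι] [Countable ι] [MeasurableSpace ι] [MeasurableSingletonClass ι]
    [MeasurableSpace β] {u : ι → Ω → β} (hu : ∀ i, Measurable (u i)) {s : Set β}
    (hs : MeasurableSet s) (n m : ι) : Measurable (hittingBtwn u s n m) := by
  have hτ := Adapted.isStoppingTime_hittingBtwn (f := Filtration.const ι _ le_rfl) (n := n)
    (n' := m) hu hs
  refine measurable_to_countable' fun i => ?_
  have hi := hτ.measurableSet_eq_of_countable i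
  simp only [WithTop.coe_inj] at hi
  exact hi

theorem le_hittingBtwn_Ioi_of_monotone [ConditionallyCompleteLinearOrder ι] [Preorder β]
    {u : ι → Ω → β} {ω : Ω} (hu : Monotone (u · ω)) {r : β} {n m k : ι} (hkm : k ≤ m)
    (hk : u k ω ≤ r) : k ≤ hittingBtwn u (Set.Ioi r) n m ω := by
  by_contra! h
  obtain ⟨j, hj, hjr⟩ := (hittingBtwn_lt_iff k hkm).1 h
  exact (hu hj.2.le |>.trans hk).not_gt hjr

theorem hittingBtwn_eq_sInf_union {u : ℕ → Ω → β} {s : Set β} {n m : ℕ} {ω : Ω} :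
    hittingBtwn u s n m ω = sInf ({m} ∪ {k | n ≤ k ∧ u k ω ∈ s}) := by
  refine le_antisymm (le_csInf ⟨m, Or.inl rfl⟩ ?_) (Nat.sInf_le ?_)
  · rintro k (rfl | ⟨hnk, hks⟩)
    · exact hittingBtwn_le ω
    · rcases le_or_gt k m with hkm | hmk
      · exact hittingBtwn_le_of_mem hnk hkm hks
      · exact (hittingBtwn_le ω).trans hmk.le
  · by_cases h : ∃ j ∈ Set.Icc n m, u j ω ∈ s
    · exact Or.inr ⟨le_hittingBtwn_of_exists h, hittingBtwn_mem_set h⟩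
    · left
      simp only [hittingBtwn, if_neg h, Set.mem_singleton_iff]

theorem numRounds_eq_hittingBtwn (H : ℕ → Ω → ℝ) (M : ℕ) (snr R : ℝ) (ω : Ω) :
    numRounds H M snr R ω = hittingBtwn
      (fun m ω => ∑ i ∈ Finset.range m, logb 2 (1 + snr * H i ω)) (Set.Ioi R) 1 M ω :=
  hittingBtwn_eq_sInf_union.symm

end HittingTime

section ConvergenceInMeasure

variable {Ω ι : Type*} [MeasurableSpace Ω] {μ : Measure Ω} {l : Filter ι} {A : ι → Ω → ℝ}
  {c a : ℝ}

theorem MeasureTheory.TendstoInMeasure.tendsto_measureReal_le_of_lt [IsFiniteMeasure μ]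
    (hA : TendstoInMeasure μ A l fun _ => c) (ha : a < c) :
    Tendsto (fun i => μ.real {ω | A i ω ≤ a}) l (𝓝 0) := by
  refine squeeze_zero (fun _ => measureReal_nonneg) (fun i => measureReal_mono fun ω hω => ?_)
    (tendstoInMeasure_iff_measureReal_dist.1 hA (c - a) (sub_pos.2 ha))
  rw [Set.mem_ofPred_eq, Real.dist_eq, abs_sub_comm]
  exact (sub_le_sub_left hω c).trans (le_abs_self _)

theorem MeasureTheory.TendstoInMeasure.tendsto_measureReal_gt_of_gt [IsFiniteMeasure μ]
    (hA : TendstoInMeasure μ A l fun _ => c) (ha : c < a) :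
    Tendsto (fun i => μ.real {ω | a < A i ω}) l (𝓝 0) := by
  refine squeeze_zero (fun _ => measureReal_nonneg) (fun i => measureReal_mono fun ω hω => ?_)
    (tendstoInMeasure_iff_measureReal_dist.1 hA (a - c) (sub_pos.2 ha))
  rw [Set.mem_ofPred_eq, Real.dist_eq]
  exact (sub_le_sub_right (le_of_lt hω) c).trans (le_abs_self _)

theorem MeasureTheory.TendstoInMeasure.tendsto_of_measureReal_le_eq [IsProbabilityMeasure μ]
    (hA : TendstoInMeasure μ A l fun _ => c) {ε : ℝ} (hε0 : 0 < ε) (hε1 : ε < 1) {C : ι → ℝ}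
    (hC : ∀ᶠ i in l, μ.real {ω | A i ω ≤ C i} = ε) : Tendsto C l (𝓝 c) := by
  refine tendsto_order.2 ⟨fun a ha => ?_, fun a ha => ?_⟩
  · filter_upwards [hC, (hA.tendsto_measureReal_le_of_lt ha).eventually_lt_const hε0]
      with i hCi hi
    by_contra! hle
    exact (hCi ▸ measureReal_mono fun ω hω => le_trans hω hle).not_gt hi
  · filter_upwards [hC, (hA.tendsto_measureReal_gt_of_gt ha).eventually_lt_const (sub_pos.2 hε1)]
      with i hCi hi
    by_contra! hle
    have hcover : μ.real Set.univ ≤ μ.real ({ω | A i ω ≤ C i} ∪ {ω | a < A i ω}) :=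
      measureReal_mono (fun ω _ => (le_or_gt (A i ω) a).imp (fun h => h.trans hle) id)
        (measure_ne_top _ _)
    linarith [measureReal_union_le (μ := μ) {ω | A i ω ≤ C i} {ω | a < A i ω},
      probReal_univ (μ := μ)]

end ConvergenceInMeasure

section PartialSums

variable {Ω : Type*} [MeasurableSpace Ω] {μ : Measure Ω} [IsProbabilityMeasure μ]
  {S : ℕ → Ω → ℝ} {c : ℝ} {C : ℕ → ℝ}

theorem tendsto_measureReal_hittingBtwn_lt_floor (hmono : ∀ᵐ ω ∂μ, Monotone (S · ω))
    (hS : TendstoInMeasure μ (fun n ω => S n ω / n) atTop fun _ => c) (hc : 0 < c)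
    (hC : Tendsto C atTop (𝓝 c))
    {β : ℝ} (hβ0 : 0 < β) (hβ1 : β < 1) :
    Tendsto (fun M : ℕ => μ.real {ω | hittingBtwn S (Set.Ioi (M * C M)) 1 M ω < ⌊β * M⌋₊})
      atTop (𝓝 0) := by
  obtain ⟨γ, hcγ, hγβ⟩ : ∃ γ, c < γ ∧ γ < c / β :=
    exists_between ((lt_div_iff₀ hβ0).2 (by nlinarith))
  have hβγ : β * γ < c := by rwa [lt_div_iff₀' hβ0] at hγβ
  set m : ℕ → ℕ := fun M => ⌊β * M⌋₊
  have hm : Tendsto m atTop atTop :=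
    tendsto_nat_floor_atTop.comp (tendsto_natCast_atTop_atTop.const_mul_atTop hβ0)
  refine squeeze_zero' (Eventually.of_forall fun _ => measureReal_nonneg) ?_
    ((hS.tendsto_measureReal_gt_of_gt hcγ).comp hm)
  filter_upwards [hm.eventually_ge_atTop 1, hC.eventually_const_lt hβγ] with M hm1 hCM
  refine ENNReal.toReal_mono (measure_ne_top _ _) (measure_mono_ae ?_)
  filter_upwards [hmono] with ω hω (hlt : _ < m M)
  show γ < S (m M) ω / m M
  by_contra! hle
  have hmM : (m M : ℝ) ≤ β * M := Nat.floor_le (by positivity)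
  have hm0 : (0 : ℝ) < m M := by exact_mod_cast hm1
  refine hlt.not_ge (le_hittingBtwn_Ioi_of_monotone hω ?_ ?_)
  · exact_mod_cast hmM.trans (mul_le_of_le_one_left (Nat.cast_nonneg _) hβ1.le)
  · calc S (m M) ω ≤ m M * γ := by rwa [div_le_iff₀' hm0] at hle
      _ ≤ β * M * γ := by gcongr; linarith
      _ ≤ M * C M := by nlinarith [(Nat.cast_nonneg M : (0 : ℝ) ≤ M)]

theorem tendsto_integral_hittingBtwn_div (hSm : ∀ n, Measurable (S n))
    (hmono : ∀ᵐ ω ∂μ, Monotone (S · ω))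
    (hS : TendstoInMeasure μ (fun n ω => S n ω / n) atTop fun _ => c) (hc : 0 < c)
    (hC : Tendsto C atTop (𝓝 c)) :
    Tendsto (fun M : ℕ => (∫ ω, ((hittingBtwn S (Set.Ioi (M * C M)) 1 M ω : ℕ) : ℝ) ∂μ) / M)
      atTop (𝓝 1) := by
  set τ : ℕ → Ω → ℕ := fun M => hittingBtwn S (Set.Ioi (M * C M)) 1 M
  have hτm (M : ℕ) : Measurable (τ M) := measurable_hittingBtwn hSm measurableSet_Ioi 1 M
  have hτM (M : ℕ) (ω : Ω) : (τ M ω : ℝ) ≤ M := Nat.cast_le.2 (hittingBtwn_le ω)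
  have hint (M : ℕ) : Integrable (fun ω => (τ M ω : ℝ)) μ :=
    .of_bound (measurable_from_nat.comp (hτm M)).aestronglyMeasurable M
      (ae_of_all _ fun ω => by simpa using hτM M ω)
  refine tendsto_order.2 ⟨fun a ha => ?_, fun a ha => ?_⟩
  · obtain ⟨β, hβa, hβ1⟩ := exists_between (max_lt ha one_pos)
    have hβ0 : 0 < β := (le_max_right a 0).trans_lt hβa
    have hlim : Tendsto (fun M : ℕ => (⌊β * M⌋₊ / M : ℝ) * (1 - μ.real {ω | τ M ω < ⌊β * M⌋₊}))
        atTop (𝓝 β) := by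
      simpa using ((tendsto_nat_floor_mul_div_atTop hβ0.le).comp tendsto_natCast_atTop_atTop).mul
        ((tendsto_measureReal_hittingBtwn_lt_floor hmono hS hc hC hβ0 hβ1).const_sub 1)
    filter_upwards [hlim.eventually_const_lt ((le_max_left a 0).trans_lt hβa),
      eventually_gt_atTop 0] with M hM hM0
    refine hM.trans_le ((le_div_iff₀ (by positivity)).2 ?_)
    have hcompl : {ω | (⌊β * M⌋₊ : ℝ) ≤ τ M ω} = {ω | τ M ω < ⌊β * M⌋₊}ᶜ := by
      ext ω; simp [not_lt]
    calc (⌊β * M⌋₊ / M : ℝ) * (1 - μ.real {ω | τ M ω < ⌊β * M⌋₊}) * M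
        = ⌊β * M⌋₊ * μ.real {ω | (⌊β * M⌋₊ : ℝ) ≤ τ M ω} := by
          rw [hcompl, probReal_compl_eq_one_sub (measurableSet_lt (hτm M) measurable_const)]
          field_simp
      _ ≤ ∫ ω, (τ M ω : ℝ) ∂μ :=
          mul_meas_ge_le_integral_of_nonneg (ae_of_all _ fun _ => Nat.cast_nonneg _) (hint M) _
  · filter_upwards [eventually_gt_atTop 0] with M hM
    refine lt_of_le_of_lt ((div_le_one (by positivity)).2 ?_) ha
    calc ∫ ω, (τ M ω : ℝ) ∂μ ≤ ∫ _, (M : ℝ) ∂μ :=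
          integral_mono (hint M) (integrable_const _) (hτM M)
      _ = M := by simp

end PartialSums

theorem ae_pos_expMeasure (r : ℝ) : ∀ᵐ x ∂expMeasure r, 0 < x := by
  have hIic : expMeasure r (Set.Iic 0) = 0 := by
    rw [expMeasure, gammaMeasure, withDensity_apply _ measurableSet_Iic,
      setLIntegral_congr Iio_ae_eq_Iic.symm]
    exact lintegral_gammaPDF_of_nonpos le_rfl
  exact ae_iff.2 (measure_mono_null (fun x hx => not_lt.1 hx) hIic)

theorem integrable_id_expMeasure {r : ℝ} (hr : 0 < r) : Integrable id (expMeasure r) := by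
  have hm : Measurable (gammaPDF 1 r) := (measurable_gammaPDFReal 1 r).ennreal_ofReal
  rw [expMeasure, gammaMeasure,
    integrable_withDensity_iff hm (ae_of_all _ fun _ => ENNReal.ofReal_lt_top)]
  have hdensity : (fun x => id x * (gammaPDF 1 r x).toReal)
      = Set.indicator (Set.Ioi 0) fun x => r * (x ^ (1 : ℝ) * exp (-r * x ^ (1 : ℝ))) := by
    ext x
    rcases lt_trichotomy x 0 with hx | rfl | hx
    · simp [hx, hx.not_gt, gammaPDF_of_neg]
    · simp
    · simp [hx, hx.le, gammaPDF, gammaPDFReal, ENNReal.toReal_ofReal, hr.le, (exp_pos _).le,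
        mul_left_comm]
  rw [hdensity, integrable_indicator_iff measurableSet_Ioi]
  exact (integrableOn_rpow_mul_exp_neg_mul_rpow (by norm_num) one_pos hr).const_mul r

theorem integral_pos_of_ae_pos {Ω : Type*} [MeasurableSpace Ω] {μ : Measure Ω} [NeZero μ]
    {f : Ω → ℝ} (hf : Integrable f μ) (hpos : ∀ᵐ ω ∂μ, 0 < f ω) : 0 < ∫ ω, f ω ∂μ := by
  rw [integral_pos_iff_support_of_nonneg_ae (hpos.mono fun _ h => h.le) hf]
  refine pos_iff_ne_zero.2 fun h0 => ?_
  obtain ⟨ω, hω, hω0⟩ := (hpos.and (measure_eq_zero_iff_ae_notMem.1 h0)).exists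
  exact hω0 hω.ne'

theorem tendstoInMeasure_average_comp {Ω : Type*} [MeasurableSpace Ω] {μ : Measure Ω}
    [IsProbabilityMeasure μ] {H : ℕ → Ω → ℝ} (hmeas : ∀ i, Measurable (H i))
    (hindep : iIndepFun H μ) (hident : ∀ i, IdentDistrib (H i) (H 0) μ μ) {g : ℝ → ℝ}
    (hg : Measurable g) (hint : Integrable (fun ω => g (H 0 ω)) μ) :
    TendstoInMeasure μ (fun n ω => (∑ i ∈ Finset.range n, g (H i ω)) / n) atTop
      fun _ => ∫ ω, g (H 0 ω) ∂μ :=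
  tendstoInMeasure_of_tendsto_ae
    (fun _ => (Finset.measurable_sum _ fun i _ => hg.comp (hmeas i)).div_const _
      |>.aestronglyMeasurable)
    (strong_law_ae_real (fun i ω => g (H i ω)) hint
      (fun _ _ hij => (hindep.indepFun hij).comp hg hg) fun i => (hident i).comp hg)

section Capacity

variable {snr x : ℝ}

theorem logb_one_add_mul_nonneg (hsnr : 0 ≤ snr) (hx : 0 ≤ x) : 0 ≤ logb 2 (1 + snr * x) :=
  logb_nonneg one_lt_two (le_add_of_nonneg_right (mul_nonneg hsnr hx))

theorem logb_one_add_mul_pos (hsnr : 0 < snr) (hx : 0 < x) : 0 < logb 2 (1 + snr * x) :=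
  logb_pos one_lt_two (lt_add_of_pos_right 1 (mul_pos hsnr hx))

theorem logb_one_add_mul_le (hsnr : 0 ≤ snr) (hx : 0 ≤ x) :
    logb 2 (1 + snr * x) ≤ snr / log 2 * x := by
  rw [logb, div_mul_eq_mul_div, div_le_div_iff_of_pos_right (log_pos one_lt_two)]
  linarith [log_le_sub_one_of_pos (by positivity : 0 < 1 + snr * x)]

theorem measurable_logb_one_add_mul : Measurable fun x : ℝ => logb 2 (1 + snr * x) := by
  unfold logb
  fun_prop

theorem MeasureTheory.Integrable.logb_one_add_mul {Ω : Type*} [MeasurableSpace Ω]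
    {μ : Measure Ω} {X : Ω → ℝ} (hX : Integrable X μ) (hX0 : 0 ≤ᵐ[μ] X) (hsnr : 0 ≤ snr) :
    Integrable (fun ω => logb 2 (1 + snr * X ω)) μ := by
  refine (hX.const_mul (snr / log 2)).mono'
    (measurable_logb_one_add_mul.comp_aemeasurable hX.aemeasurable).aestronglyMeasurable ?_
  filter_upwards [hX0] with ω hω
  rw [norm_of_nonneg (logb_one_add_mul_nonneg hsnr hω)]
  exact logb_one_add_mul_le hsnr hω

end Capacity

/-- for fixed `SNR > 0` and `ε ∈ (0, 1/2)`, with `R_init = M·C_ε^M(SNR)` the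
expected number of rounds is asymptotically full: `E[X]/M → 1` as `M → ∞`. -/
theorem expected_rounds_asymptotically_full
    {Ω : Type*} [MeasurableSpace Ω] (μ : Measure Ω) [IsProbabilityMeasure μ]
    (H : ℕ → Ω → ℝ) (hmeas : ∀ i, Measurable (H i))
    (hindep : iIndepFun H μ)
    (hdist : ∀ i, Measure.map (H i) μ = expMeasure 1)
    (snr : ℝ) (hsnr : 0 < snr) (ε : ℝ) (hε : ε ∈ Set.Ioo (0:ℝ) (1/2))
    (C : ℕ → ℝ)
    (hC : ∀ M, 1 ≤ M → 0 < C M ∧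
      (μ {ω | (1 / (M:ℝ)) * ∑ i ∈ Finset.range M,
          Real.logb 2 (1 + snr * H i ω) ≤ C M}).toReal = ε) :
    Tendsto
      (fun M : ℕ =>
        (∫ ω, (numRounds H M snr ((M : ℝ) * C M) ω : ℝ) ∂μ) / (M : ℝ))
      atTop (𝓝 1) := by
  have hpos (i : ℕ) : ∀ᵐ ω ∂μ, 0 < H i ω :=
    ae_of_ae_map (hmeas i).aemeasurable (hdist i ▸ ae_pos_expMeasure 1)
  have hident (i : ℕ) : IdentDistrib (H i) (H 0) μ μ :=
    ⟨(hmeas i).aemeasurable, (hmeas 0).aemeasurable, by rw [hdist i, hdist 0]⟩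
  have hint : Integrable (H 0) μ :=
    (integrable_map_measure aestronglyMeasurable_id (hmeas 0).aemeasurable).1
      (hdist 0 ▸ integrable_id_expMeasure one_pos)
  have hY := hint.logb_one_add_mul ((hpos 0).mono fun _ h => h.le) hsnr.le
  have hLLN := tendstoInMeasure_average_comp hmeas hindep hident measurable_logb_one_add_mul hY
  have hcap := hLLN.tendsto_of_measureReal_le_eq hε.1 (by linarith [hε.2])
    ((eventually_ge_atTop 1).mono fun M hM => by
      simpa only [one_div_mul_eq_div, measureReal_def] using (hC M hM).2)
  have hmean : 0 < ∫ ω, logb 2 (1 + snr * H 0 ω) ∂μ :=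
    integral_pos_of_ae_pos hY ((hpos 0).mono fun _ h => logb_one_add_mul_pos hsnr h)
  have hmono : ∀ᵐ ω ∂μ, Monotone fun n => ∑ i ∈ Finset.range n, logb 2 (1 + snr * H i ω) := by
    filter_upwards [ae_all_iff.2 hpos] with ω hω
    exact (Finset.sum_mono_set_of_nonneg fun i =>
      logb_one_add_mul_nonneg hsnr.le (hω i).le).comp Finset.range_mono
  simp_rw [numRounds_eq_hittingBtwn]
  exact tendsto_integral_hittingBtwn_div
    (fun _ => Finset.measurable_sum _ fun i _ => measurable_logb_one_add_mul.comp (hmeas i))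
    hmono hLLN hmean hcap
end

section
/- (Theorem 3, first part) Fix an integer M ≥ 1 and ε ∈ (0,1). With initial rate R_init = M·C_ε^M(SNR), the expected number of H-ARQ rounds converges to the maximum as the SNR grows: lim_{SNR→∞} E[X(M·C_ε^M(SNR), SNR)] = M. -/
/-!
For a fixed fading value `h > 0`, `log₂ (1 + SNR·h) = log₂ SNR + O(1)`, so after `k` rounds the
accumulated information is `k·log₂ SNR` plus a term that is bounded in probability. Comparing the
outage event after `M` rounds with a lower quantile of `∑ log₂ Hᵢ` gives
`M·C_ε^M(SNR) ≥ M·log₂ SNR + q` for a fixed `q`; hence for every `k < M` the probability that `k`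
rounds already exceed the initial rate tends to `0`. Since
`E[X] = ∑_{k<M} P(first k rounds accumulate at most R)`, the expectation tends to `M`.
-/

open MeasureTheory ProbabilityTheory Real Filter Topology

open Finset

@[fun_prop]
lemma Real.measurable_logb (b : ℝ) : Measurable (logb b) :=
  measurable_log.div_const _

lemma expMeasure_Iic_zero {r : ℝ} (hr : 0 < r) : expMeasure r (Set.Iic 0) = 0 := by
  have := isProbabilityMeasure_expMeasure hr
  rw [← measureReal_eq_zero_iff, ← cdf_eq_real, cdf_expMeasure_eq hr]
  simp

lemma ae_pos_of_map_eq_expMeasure {Ω : Type*} [MeasurableSpace Ω] {μ : Measure Ω} {X : Ω → ℝ}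
    (hX : Measurable X) {r : ℝ} (hr : 0 < r) (hmap : μ.map X = expMeasure r) :
    ∀ᵐ ω ∂μ, 0 < X ω := by
  rw [← ae_map_iff hX.aemeasurable measurableSet_Ioi, hmap, ae_iff]
  simp only [not_lt]
  exact expMeasure_Iic_zero hr

lemma logb_add_logb_le_logb_one_add_mul {b a h : ℝ} (hb : 1 < b) (ha : 0 < a) (hh : 0 < h) :
    logb b a + logb b h ≤ logb b (1 + a * h) := by
  rw [← logb_mul ha.ne' hh.ne']
  exact logb_le_logb_of_le hb (by positivity) (by linarith)

lemma logb_one_add_mul_le_logb_add_logb_one_add {b a h : ℝ} (hb : 1 < b) (ha : 1 ≤ a)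
    (hh : 0 ≤ h) : logb b (1 + a * h) ≤ logb b a + logb b (1 + h) := by
  rw [← logb_mul (by positivity) (by positivity)]
  exact logb_le_logb_of_le hb (by positivity) (by nlinarith)

lemma sInf_insert_eq_card_filter {α : Type*} [LinearOrder α] {S : ℕ → α} (hS : Monotone S)
    {R : α} (h0 : S 0 ≤ R) (M : ℕ) :
    sInf ({M} ∪ {m | 1 ≤ m ∧ R < S m}) = #{k ∈ range M | S k ≤ R} := by
  set A := {M} ∪ {m | 1 ≤ m ∧ R < S m}
  have hMA : M ∈ A := Or.inl rfl
  suffices {k ∈ range M | S k ≤ R} = range (sInf A) by rw [this, card_range]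
  ext k
  simp only [mem_filter, mem_range]
  constructor
  · rintro ⟨hkM, hk⟩
    by_contra! hjk
    rcases Nat.sInf_mem ⟨M, hMA⟩ with h | h
    · exact hjk.not_gt (h ▸ hkM)
    · exact (h.2.trans_le (hS hjk)).not_ge hk
  · intro hk
    refine ⟨hk.trans_le (Nat.sInf_le hMA), ?_⟩
    rcases Nat.eq_zero_or_pos k with rfl | hk1
    · exact h0
    · exact not_lt.1 fun h => Nat.notMem_of_lt_sInf hk (Or.inr ⟨hk1, h⟩)

section Probability

variable {Ω : Type*} [MeasurableSpace Ω] {μ : Measure Ω}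

lemma add_lt_of_measure_le_lt_measure_le {X Y : Ω → ℝ} {a q r : ℝ}
    (hXY : ∀ᵐ ω ∂μ, a + Y ω ≤ X ω) (h : μ {ω | Y ω ≤ q} < μ {ω | X ω ≤ r}) : a + q < r := by
  by_contra! hr
  refine (measure_mono_ae ?_).not_gt h
  filter_upwards [hXY] with ω hω hX
  change Y ω ≤ q
  linarith [show X ω ≤ r from hX]

variable [IsFiniteMeasure μ]

lemma tendsto_measure_le_atBot {Y : Ω → ℝ} (hY : Measurable Y) :
    Tendsto (fun q => μ {ω | Y ω ≤ q}) atBot (𝓝 0) := by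
  have h := tendsto_measure_iInter_atBot (μ := μ) (s := fun q : ℝ => {ω | Y ω ≤ q})
    (fun q => (measurableSet_le hY measurable_const).nullMeasurableSet)
    (fun q q' hqq' ω (hω : Y ω ≤ q) => hω.trans hqq') ⟨0, measure_ne_top _ _⟩
  have hempty : ⋂ q : ℝ, {ω | Y ω ≤ q} = ∅ :=
    Set.eq_empty_of_forall_notMem fun ω hω => by
      linarith [show Y ω ≤ Y ω - 1 from Set.mem_iInter.1 hω (Y ω - 1)]
  rwa [hempty, measure_empty] at h

lemma tendsto_measure_lt_atTop {Z : Ω → ℝ} (hZ : Measurable Z) :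
    Tendsto (fun t => μ {ω | t < Z ω}) atTop (𝓝 0) := by
  have h := tendsto_measure_iInter_atTop (μ := μ) (s := fun t : ℝ => {ω | t < Z ω})
    (fun t => (measurableSet_lt measurable_const hZ).nullMeasurableSet)
    (fun t t' htt' ω (hω : t' < Z ω) => htt'.trans_lt hω) ⟨0, measure_ne_top _ _⟩
  have hempty : ⋂ t : ℝ, {ω | t < Z ω} = ∅ :=
    Set.eq_empty_of_forall_notMem fun ω hω => by
      simpa using Set.mem_iInter.1 hω (Z ω)
  rwa [hempty, measure_empty] at h

end Probability

section AccumulatedInfo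

variable {Ω : Type*} (H : ℕ → Ω → ℝ)

noncomputable def accumulatedInfo (snr : ℝ) (k : ℕ) (ω : Ω) : ℝ :=
  ∑ i ∈ range k, logb 2 (1 + snr * H i ω)

variable {H}

lemma monotone_accumulatedInfo {snr : ℝ} {ω : Ω} (hsnr : 0 ≤ snr) (hH : ∀ i, 0 ≤ H i ω) :
    Monotone fun k => accumulatedInfo H snr k ω := fun _ _ hkl =>
  sum_le_sum_of_subset_of_nonneg (range_subset_range.2 hkl) fun i _ _ =>
    logb_nonneg one_lt_two (le_add_of_nonneg_right (mul_nonneg hsnr (hH i)))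

lemma numRounds_eq_card {M : ℕ} {snr R : ℝ} {ω : Ω} (hsnr : 0 ≤ snr) (hH : ∀ i, 0 ≤ H i ω)
    (hR : 0 ≤ R) :
    numRounds H M snr R ω = #{k ∈ range M | accumulatedInfo H snr k ω ≤ R} :=
  sInf_insert_eq_card_filter (monotone_accumulatedInfo hsnr hH) (by simpa [accumulatedInfo]) M

lemma mul_logb_add_le_accumulatedInfo {snr : ℝ} {ω : Ω} (hsnr : 0 < snr) (hH : ∀ i, 0 < H i ω)
    (k : ℕ) : k * logb 2 snr + ∑ i ∈ range k, logb 2 (H i ω) ≤ accumulatedInfo H snr k ω := by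
  have h := sum_le_sum fun i (_ : i ∈ range k) =>
    logb_add_logb_le_logb_one_add_mul one_lt_two hsnr (hH i)
  rwa [sum_add_distrib, sum_const, card_range, nsmul_eq_mul] at h

lemma accumulatedInfo_le_mul_logb_add {snr : ℝ} {ω : Ω} (hsnr : 1 ≤ snr) (hH : ∀ i, 0 ≤ H i ω)
    (k : ℕ) : accumulatedInfo H snr k ω ≤ k * logb 2 snr + ∑ i ∈ range k, logb 2 (1 + H i ω) := by
  have h := sum_le_sum fun i (_ : i ∈ range k) =>
    logb_one_add_mul_le_logb_add_logb_one_add one_lt_two hsnr (hH i)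
  rwa [sum_add_distrib, sum_const, card_range, nsmul_eq_mul] at h

variable [MeasurableSpace Ω] {μ : Measure Ω}

@[fun_prop]
lemma measurable_accumulatedInfo (hH : ∀ i, Measurable (H i)) (snr : ℝ) (k : ℕ) :
    Measurable (accumulatedInfo H snr k) := by
  unfold accumulatedInfo
  fun_prop

lemma integral_numRounds [IsFiniteMeasure μ] (hHm : ∀ i, Measurable (H i))
    (hH : ∀ᵐ ω ∂μ, ∀ i, 0 ≤ H i ω) (M : ℕ) {snr R : ℝ} (hsnr : 0 ≤ snr) (hR : 0 ≤ R) :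
    ∫ ω, (numRounds H M snr R ω : ℝ) ∂μ =
      ∑ k ∈ range M, μ.real {ω | accumulatedInfo H snr k ω ≤ R} := by
  have hset : ∀ k, MeasurableSet {ω | accumulatedInfo H snr k ω ≤ R} := fun k =>
    measurableSet_le (measurable_accumulatedInfo hHm snr k) measurable_const
  calc ∫ ω, (numRounds H M snr R ω : ℝ) ∂μ
      = ∫ ω, ∑ k ∈ range M, {ω | accumulatedInfo H snr k ω ≤ R}.indicator 1 ω ∂μ := by
        refine integral_congr_ae (hH.mono fun ω hω => ?_)
        simp only [numRounds_eq_card hsnr hω hR, natCast_card_filter, Set.indicator_apply,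
          Set.mem_ofPred_eq, Pi.one_apply]
    _ = ∑ k ∈ range M, μ.real {ω | accumulatedInfo H snr k ω ≤ R} := by
        rw [integral_finsetSum _ fun k _ => (integrable_const 1).indicator (hset k)]
        exact sum_congr rfl fun k _ => integral_indicator_one (hset k)

end AccumulatedInfo

section HighSNR

variable {Ω : Type*} [MeasurableSpace Ω] {μ : Measure Ω} {H : ℕ → Ω → ℝ}

lemma mul_logb_add_lt_of_measure_lt (hH : ∀ᵐ ω ∂μ, ∀ i, 0 < H i ω) {snr q R : ℝ} (hsnr : 0 < snr)
    {k : ℕ} (h : μ {ω | ∑ i ∈ range k, logb 2 (H i ω) ≤ q} <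
      μ {ω | accumulatedInfo H snr k ω ≤ R}) :
    k * logb 2 snr + q < R :=
  add_lt_of_measure_le_lt_measure_le
    (hH.mono fun _ hω => mul_logb_add_le_accumulatedInfo hsnr hω k) h

lemma tendsto_measure_lt_accumulatedInfo [IsFiniteMeasure μ] (hHm : ∀ i, Measurable (H i))
    (hH : ∀ᵐ ω ∂μ, ∀ i, 0 ≤ H i ω) {k M : ℕ} (hkM : k < M) {R : ℝ → ℝ} {q : ℝ}
    (hR : ∀ᶠ snr in atTop, M * logb 2 snr + q ≤ R snr) :
    Tendsto (fun snr => μ {ω | R snr < accumulatedInfo H snr k ω}) atTop (𝓝 0) := by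
  set Z : Ω → ℝ := fun ω => ∑ i ∈ range k, logb 2 (1 + H i ω)
  set t : ℝ → ℝ := fun snr => (M - k) * logb 2 snr + q
  have ht : Tendsto t atTop atTop :=
    tendsto_atTop_add_const_right _ _ <| (tendsto_logb_atTop one_lt_two).const_mul_atTop
      (sub_pos.2 (Nat.cast_lt.2 hkM))
  have hle : ∀ᶠ snr in atTop,
      μ {ω | R snr < accumulatedInfo H snr k ω} ≤ μ {ω | t snr < Z ω} := by
    filter_upwards [hR, eventually_ge_atTop 1] with snr hRsnr hsnr
    refine measure_mono_ae (hH.mono fun ω hω (hlt : R snr < _) => ?_)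
    have := accumulatedInfo_le_mul_logb_add hsnr hω k
    change t snr < Z ω
    simp only [t, Z] at this ⊢
    linarith
  exact tendsto_of_tendsto_of_tendsto_of_le_of_le' tendsto_const_nhds
    ((tendsto_measure_lt_atTop (by fun_prop)).comp ht) (.of_forall fun _ => zero_le) hle

lemma tendsto_measureReal_accumulatedInfo_le [IsProbabilityMeasure μ]
    (hHm : ∀ i, Measurable (H i)) (hH : ∀ᵐ ω ∂μ, ∀ i, 0 ≤ H i ω) {k M : ℕ} (hkM : k < M)
    {R : ℝ → ℝ} {q : ℝ} (hR : ∀ᶠ snr in atTop, M * logb 2 snr + q ≤ R snr) :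
    Tendsto (fun snr => μ.real {ω | accumulatedInfo H snr k ω ≤ R snr}) atTop (𝓝 1) := by
  have h := ((ENNReal.tendsto_toReal ENNReal.zero_ne_top).comp
    (tendsto_measure_lt_accumulatedInfo hHm hH hkM hR)).const_sub 1
  rw [ENNReal.toReal_zero, sub_zero] at h
  refine h.congr fun snr => ?_
  have hcompl : {ω | accumulatedInfo H snr k ω ≤ R snr} =
      {ω | R snr < accumulatedInfo H snr k ω}ᶜ := by
    ext; simp
  rw [hcompl, probReal_compl_eq_one_sub (measurableSet_lt measurable_const (by fun_prop))]
  rfl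

end HighSNR

theorem expected_rounds_tendsto_M_high_snr_general
    {Ω : Type*} [MeasurableSpace Ω] (μ : Measure Ω) [IsProbabilityMeasure μ]
    (H : ℕ → Ω → ℝ) (hmeas : ∀ i, Measurable (H i))
    (hdist : ∀ i, Measure.map (H i) μ = expMeasure 1)
    (M : ℕ) (ε : ℝ) (hε : ε ∈ Set.Ioo (0:ℝ) 1)
    (C : ℝ → ℝ)
    (hC : ∀ snr > (0:ℝ), 0 < C snr ∧
      (μ {ω | (1 / (M:ℝ)) * ∑ i ∈ Finset.range M,
          Real.logb 2 (1 + snr * H i ω) ≤ C snr}).toReal = ε) :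
    Tendsto
      (fun snr : ℝ => ∫ ω, (numRounds H M snr ((M : ℝ) * C snr) ω : ℝ) ∂μ)
      atTop (𝓝 (M : ℝ)) := by
  have hpos : ∀ᵐ ω ∂μ, ∀ i, 0 < H i ω :=
    ae_all_iff.2 fun i => ae_pos_of_map_eq_expMeasure (hmeas i) one_pos (hdist i)
  have hnonneg : ∀ᵐ ω ∂μ, ∀ i, 0 ≤ H i ω := hpos.mono fun _ hω i => (hω i).le
  obtain ⟨q, hq⟩ : ∃ q, μ {ω | ∑ i ∈ range M, logb 2 (H i ω) ≤ q} < ENNReal.ofReal ε :=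
    ((tendsto_measure_le_atBot (by fun_prop)).eventually_lt_const
      (ENNReal.ofReal_pos.2 hε.1)).exists
  have hrate (hM : 0 < M) : ∀ᶠ snr in atTop, M * logb 2 snr + q ≤ M * C snr := by
    filter_upwards [eventually_gt_atTop 0] with snr hsnr
    have houtage : μ {ω | accumulatedInfo H snr M ω ≤ M * C snr} = ENNReal.ofReal ε := by
      simp_rw [← (hC snr hsnr).2, ENNReal.ofReal_toReal (measure_ne_top _ _), one_div_mul_eq_div,
        div_le_iff₀' (Nat.cast_pos (α := ℝ) |>.2 hM)]
      rfl
    exact (mul_logb_add_lt_of_measure_lt hpos hsnr (hq.trans_eq houtage.symm)).le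
  have hterm : ∀ k ∈ range M,
      Tendsto (fun snr => μ.real {ω | accumulatedInfo H snr k ω ≤ M * C snr}) atTop (𝓝 1) :=
    fun k hk => tendsto_measureReal_accumulatedInfo_le hmeas hnonneg (mem_range.1 hk)
      (hrate (Nat.zero_lt_of_lt (mem_range.1 hk)))
  have hexpect : (fun snr => ∫ ω, (numRounds H M snr (M * C snr) ω : ℝ) ∂μ) =ᶠ[atTop]
      fun snr => ∑ k ∈ range M, μ.real {ω | accumulatedInfo H snr k ω ≤ M * C snr} :=
    (eventually_gt_atTop 0).mono fun snr hsnr =>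
      integral_numRounds hmeas hnonneg M hsnr.le (by have := (hC snr hsnr).1; positivity)
  simpa using (tendsto_finsetSum _ hterm).congr' hexpect.symm

/-- Theorem 3, first part: with `R_init = M·C_ε^M(SNR)`, the expected number of
H-ARQ rounds converges to `M` as `SNR → ∞`. -/
theorem expected_rounds_tendsto_M_high_snr
    {Ω : Type*} [MeasurableSpace Ω] (μ : Measure Ω) [IsProbabilityMeasure μ]
    (H : ℕ → Ω → ℝ) (hmeas : ∀ i, Measurable (H i))
    (hindep : iIndepFun H μ)
    (hdist : ∀ i, Measure.map (H i) μ = expMeasure 1)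
    (M : ℕ) (hM : 1 ≤ M) (ε : ℝ) (hε : ε ∈ Set.Ioo (0:ℝ) 1)
    (C : ℝ → ℝ)
    (hC : ∀ snr > (0:ℝ), 0 < C snr ∧
      (μ {ω | (1 / (M:ℝ)) * ∑ i ∈ Finset.range M,
          Real.logb 2 (1 + snr * H i ω) ≤ C snr}).toReal = ε) :
    Tendsto
      (fun snr : ℝ => ∫ ω, (numRounds H M snr ((M : ℝ) * C snr) ω : ℝ) ∂μ)
      atTop (𝓝 (M : ℝ)) :=
  expected_rounds_tendsto_M_high_snr_general μ H hmeas hdist M ε hε C hC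
end
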